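/- Fix l > 1, m > 1, and set n = l + m. Let G be the graph on vertex set {1,…,n+1} whose edges are: all pairs {i,j} with i ∈ {1,…,l} and j ∈ {l+1,…,n} (a copy of K_{l,m}), together with the single edge {1, n+1}. Let G' be the graph on {1,…,n+1} whose edges are all pairs {i,j} with i ∈ {1,…,l} and j ∈ {l+1,…,n+1} (a copy of K_{l,m+1}, the extra vertex n+1 being joined to all l vertices of the first part). Then for every k ∈ {2, 4, 6, 14}, 𝔞_k^G = 𝔞_k^{G'}. -/

import Mathlib

open Matrix DirectSum

attribute [local instance 100] LieRing.ofAssociativeRing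

noncomputable section

/-- The identity Pauli matrix `I`. -/
def PauliI : Matrix (Fin 2) (Fin 2) ℂ := 1

/-- The Pauli matrix `X`. -/
def PauliX : Matrix (Fin 2) (Fin 2) ℂ := !![0, 1; 1, 0]

/-- The Pauli matrix `Y`. -/
def PauliY : Matrix (Fin 2) (Fin 2) ℂ := !![0, -Complex.I; Complex.I, 0]

/-- The Pauli matrix `Z`. -/
def PauliZ : Matrix (Fin 2) (Fin 2) ℂ := !![1, 0; 0, -1]

/-- The `n`-fold Kronecker product of the 2×2 matrices `A 0, …, A (n-1)`, realized as a
matrix indexed by `Fin n → Fin 2` (a type of cardinality `2^n`). -/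
def pauliString {n : ℕ} (A : Fin n → Matrix (Fin 2) (Fin 2) ℂ) :
    Matrix (Fin n → Fin 2) (Fin n → Fin 2) ℂ :=
  Matrix.of fun x y => ∏ k, A k (x k) (y k)

/-- The Pauli string `A_i B_j` with `A` at site `i`, `B` at site `j`, and identity elsewhere. -/
def twoLocal {n : ℕ} (A B : Matrix (Fin 2) (Fin 2) ℂ) (i j : Fin n) :
    Matrix (Fin n → Fin 2) (Fin n → Fin 2) ℂ :=
  pauliString (fun k => if k = i then A else if k = j then B else PauliI)

/-- The Pauli string `A_i` with `A` at site `i` and identity elsewhere. -/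
def oneLocal {n : ℕ} (A : Matrix (Fin 2) (Fin 2) ℂ) (i : Fin n) :
    Matrix (Fin n → Fin 2) (Fin n → Fin 2) ℂ :=
  pauliString (fun k => if k = i then A else PauliI)

/-- The generating sets `𝒜_k` (a pair `(a, b)` stands for `a ⊗ b`). -/
def genSet : ℕ → Set (Matrix (Fin 2) (Fin 2) ℂ × Matrix (Fin 2) (Fin 2) ℂ)
  | 2 => {(PauliX, PauliY), (PauliY, PauliX)}
  | 4 => {(PauliX, PauliX), (PauliY, PauliY)}
  | 6 => {(PauliX, PauliX), (PauliY, PauliZ), (PauliZ, PauliY)}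
  | 7 => {(PauliX, PauliX), (PauliY, PauliY), (PauliZ, PauliZ)}
  | 14 => {(PauliX, PauliX), (PauliY, PauliY), (PauliX, PauliY), (PauliY, PauliX)}
  | 16 => {(PauliX, PauliY), (PauliY, PauliX), (PauliY, PauliZ), (PauliZ, PauliY)}
  | 20 => {(PauliX, PauliX), (PauliY, PauliY), (PauliY, PauliZ), (PauliZ, PauliY)}
  | 22 => {(PauliX, PauliX), (PauliX, PauliY), (PauliY, PauliX), (PauliX, PauliZ), (PauliZ, PauliX)}
  | _ => ∅

/-- The dynamical Lie algebra `𝔞_k^G`: the smallest real Lie subalgebra of the `2^n × 2^n`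
complex matrices containing `i·(a_i · b_j)` for every edge `{i, j}` of `G` and every pair
`(a, b)` with `a ⊗ b ∈ 𝒜_k`. -/
def dla (k : ℕ) {n : ℕ} (G : SimpleGraph (Fin n)) :
    LieSubalgebra ℝ (Matrix (Fin n → Fin 2) (Fin n → Fin 2) ℂ) :=
  LieSubalgebra.lieSpan ℝ _
    {M | ∃ i j : Fin n, G.Adj i j ∧ ∃ p ∈ genSet k, M = Complex.I • twoLocal p.1 p.2 i j}

/-- The complete bipartite graph `K_{l,m}` on `{1, …, l + m + 1}` (parts `{1, …, l}` and
`{l + 1, …, l + m}`), together with one extra edge joining vertex `1` to the extra vertex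
`l + m + 1`. -/
def KbipPlusPendant (l m : ℕ) : SimpleGraph (Fin (l + m + 1)) :=
  SimpleGraph.fromRel (fun i j =>
    ((i : ℕ) < l ∧ l ≤ (j : ℕ) ∧ (j : ℕ) < l + m) ∨ ((i : ℕ) = 0 ∧ (j : ℕ) = l + m))

/-- The complete bipartite graph `K_{l,m+1}` on `{1, …, l + m + 1}`, with parts `{1, …, l}` and
`{l + 1, …, l + m + 1}`. -/
def KbipExtended (l m : ℕ) : SimpleGraph (Fin (l + m + 1)) :=
  SimpleGraph.fromRel (fun i j => (i : ℕ) < l ∧ l ≤ (j : ℕ))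

/-!
Every edge of `K_{l,m+1}` missing from `G` joins some `w ∈ {2, …, l}` to the pendant vertex
`n + 1`, and `w` lies on the square `w, l + 1, 1, l + 2` of `K_{l,m}`, whose vertex `1` carries
the pendant edge `{1, n + 1}`. If `iP` and `iQ` are anticommuting Pauli strings, then `PQ = ±i R`
for a Pauli string `R`, so `⁅iP, iQ⁆ = -2PQ` is a nonzero real multiple of `iR`. Twelve such
commutators, starting from generators on this five-vertex subgraph, yield the generators on
`{w, n + 1}` for `k = 2, 4`; for `k = 6` the path `w, l + 1, 1, n + 1` already suffices, and
`𝒜_14 = 𝒜_2 ∪ 𝒜_4`.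
-/

open Function

def pauliOfLabel : Fin 4 → Matrix (Fin 2) (Fin 2) ℂ := ![PauliI, PauliX, PauliY, PauliZ]

/-- Odd exactly when the two Pauli matrices anticommute. -/
def labelPhase : Fin 4 → Fin 4 → ℕ :=
  ![![0, 0, 0, 0], ![0, 0, 1, 3], ![0, 3, 0, 1], ![0, 1, 3, 0]]

theorem pauliOfLabel_mul (a b : Fin 4) :
    pauliOfLabel a * pauliOfLabel b = Complex.I ^ labelPhase a b • pauliOfLabel (a ^^^ b) := by
  fin_cases a <;> fin_cases b <;> ext x y <;> fin_cases x <;> fin_cases y <;>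
    simp [pauliOfLabel, labelPhase, PauliI, PauliX, PauliY, PauliZ, Matrix.mul_apply, pow_succ]

theorem four_dvd_labelPhase_add_swap (a b : Fin 4) : 4 ∣ labelPhase a b + labelPhase b a := by
  revert a b
  decide

theorem pauliString_mul {n : ℕ} (A B : Fin n → Matrix (Fin 2) (Fin 2) ℂ) :
    pauliString A * pauliString B = pauliString fun k => A k * B k := by
  ext x y
  simp only [pauliString, Matrix.mul_apply, Matrix.of_apply]
  rw [Fintype.prod_sum fun k t => A k (x k) t * B k t (y k)]
  exact Finset.sum_congr rfl fun z _ => Finset.prod_mul_distrib.symm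

theorem pauliString_smul {n : ℕ} (c : Fin n → ℂ) (A : Fin n → Matrix (Fin 2) (Fin 2) ℂ) :
    pauliString (fun k => c k • A k) = (∏ k, c k) • pauliString A := by
  ext x y
  simp only [pauliString, Matrix.of_apply, Matrix.smul_apply, smul_eq_mul,
    Finset.prod_mul_distrib]

def labelString {n : ℕ} (f : Fin n → Fin 4) : Matrix (Fin n → Fin 2) (Fin n → Fin 2) ℂ :=
  pauliString fun k => pauliOfLabel (f k)

theorem labelString_mul {n : ℕ} (f g : Fin n → Fin 4) :
    labelString f * labelString g =
      Complex.I ^ (∑ k, labelPhase (f k) (g k)) • labelString fun k => f k ^^^ g k := by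
  simp only [labelString, pauliString_mul, pauliOfLabel_mul, pauliString_smul,
    Finset.prod_pow_eq_pow_sum]

theorem I_pow_eq_neg_of_odd {s t : ℕ} (hs : Odd s) (hst : 4 ∣ s + t) :
    Complex.I ^ t = -Complex.I ^ s := by
  obtain ⟨q, hq⟩ := hst
  have hsum : Complex.I ^ s * Complex.I ^ t = 1 := by
    rw [← pow_add, hq, pow_mul, Complex.I_pow_four, one_pow]
  have hsq : Complex.I ^ s * Complex.I ^ s = -1 := by
    rw [← pow_add, ← two_mul, pow_mul, Complex.I_sq, hs.neg_one_pow]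
  apply mul_left_cancel₀ (pow_ne_zero s Complex.I_ne_zero)
  rw [hsum, mul_neg, hsq, neg_neg]

theorem labelString_anticomm {n : ℕ} {f g : Fin n → Fin 4}
    (hodd : Odd (∑ k, labelPhase (f k) (g k))) :
    labelString g * labelString f = -(labelString f * labelString g) := by
  have h4 : 4 ∣ ∑ k, labelPhase (f k) (g k) + ∑ k, labelPhase (g k) (f k) := by
    rw [← Finset.sum_add_distrib]
    exact Finset.dvd_sum fun k _ => four_dvd_labelPhase_add_swap _ _
  simp only [labelString_mul, Fin.xor_comm (g _), I_pow_eq_neg_of_odd hodd h4, neg_smul]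

theorem I_smul_mem_of_anticomm {m : Type*} [Fintype m] [DecidableEq m]
    {L : LieSubalgebra ℝ (Matrix m m ℂ)} {A B C : Matrix m m ℂ}
    (hA : Complex.I • A ∈ L) (hB : Complex.I • B ∈ L) (hBA : B * A = -(A * B))
    {s : ℕ} (hs : Odd s) (hAB : A * B = Complex.I ^ s • C) : Complex.I • C ∈ L := by
  obtain ⟨r, rfl⟩ := hs
  have hlie :
      ⁅Complex.I • A, Complex.I • B⁆ = (-2 * (-1) ^ r : ℝ) • (Complex.I • C) := by
    rw [Ring.lie_def, smul_mul_smul_comm, smul_mul_smul_comm, hBA, hAB, pow_succ, pow_mul,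
      Complex.I_sq, ← Complex.coe_smul, smul_neg, sub_neg_eq_add, smul_smul, smul_smul,
      ← add_smul]
    congr 1
    push_cast
    linear_combination (2 * (-1) ^ r * Complex.I) * Complex.I_sq
  have hne : (-2 * (-1) ^ r : ℝ) ≠ 0 := by positivity
  have hmem := L.smul_mem (-2 * (-1) ^ r : ℝ)⁻¹ (hlie ▸ L.lie_mem hA hB)
  rwa [smul_smul, inv_mul_cancel₀ hne, one_smul] at hmem

@[simp]
theorem SimpleGraph.Copy.coe_toEmbedding {α β : Type*} {A : SimpleGraph α} {B : SimpleGraph β}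
    (c : A.Copy B) : ⇑c.toEmbedding = c :=
  rfl

section Embedded

variable {ι : Type*} {n : ℕ} {L : LieSubalgebra ℝ (Matrix (Fin n → Fin 2) (Fin n → Fin 2) ℂ)}

theorem extend_xor (e : ι ↪ Fin n) (f g : ι → Fin 4) :
    extend e (fun i => f i ^^^ g i) 0 = fun k => extend e f 0 k ^^^ extend e g 0 k := by
  funext k
  by_cases hk : ∃ i, e i = k
  · obtain ⟨i, rfl⟩ := hk
    simp only [e.injective.extend_apply]
  · simp only [extend_apply' _ _ _ hk, Pi.zero_apply]
    rfl

theorem sum_labelPhase_extend [Fintype ι] (e : ι ↪ Fin n) (f g : ι → Fin 4) :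
    ∑ k, labelPhase (extend e f 0 k) (extend e g 0 k) = ∑ i, labelPhase (f i) (g i) := by
  refine (Fintype.sum_of_injective e e.injective _ _ (fun k hk => ?_) fun i => ?_).symm
  · simp only [Set.mem_range, not_exists] at hk
    simp [extend_apply' _ _ _ fun ⟨i, h⟩ => hk i h, labelPhase]
  · simp only [e.injective.extend_apply]

/-- `L` contains `i` times the Pauli string with the labels `f` on the sites `e i` and `I`
elsewhere. -/
def StringMem (L : LieSubalgebra ℝ (Matrix (Fin n → Fin 2) (Fin n → Fin 2) ℂ))
    (e : ι ↪ Fin n) (f : ι → Fin 4) : Prop :=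
  Complex.I • labelString (extend e f 0) ∈ L

theorem StringMem.commutator [Fintype ι] {e : ι ↪ Fin n} {f g h : ι → Fin 4}
    (hf : StringMem L e f) (hg : StringMem L e g)
    (hodd : Odd (∑ i, labelPhase (f i) (g i)) := by decide)
    (hh : h = (fun i => f i ^^^ g i) := by decide) : StringMem L e h := by
  rw [← sum_labelPhase_extend e] at hodd
  rw [StringMem, hh, extend_xor]
  exact I_smul_mem_of_anticomm hf hg (labelString_anticomm hodd) hodd (labelString_mul _ _)

variable [DecidableEq ι]

def pairLabels (i j : ι) (a b : Fin 4) : ι → Fin 4 :=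
  fun x => if x = i then a else if x = j then b else 0

theorem stringMem_pairLabels_iff {e : ι ↪ Fin n} {i j : ι} {a b : Fin 4} :
    StringMem L e (pairLabels i j a b) ↔
      Complex.I • twoLocal (pauliOfLabel a) (pauliOfLabel b) (e i) (e j) ∈ L := by
  suffices labelString (extend e (pairLabels i j a b) 0) =
      twoLocal (pauliOfLabel a) (pauliOfLabel b) (e i) (e j) by rw [StringMem, this]
  refine congrArg pauliString (funext fun k => ?_)
  by_cases hk : ∃ x, e x = k
  · obtain ⟨x, rfl⟩ := hk
    simp only [e.injective.extend_apply, pairLabels, e.injective.eq_iff]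
    split_ifs <;> rfl
  · have hi : k ≠ e i := fun h => hk ⟨i, h.symm⟩
    have hj : k ≠ e j := fun h => hk ⟨j, h.symm⟩
    simp only [extend_apply' _ _ _ hk, Pi.zero_apply, hi, hj, if_false]
    rfl

theorem StringMem.generator {k : ℕ} {A : SimpleGraph ι} {G : SimpleGraph (Fin n)}
    (c : A.Copy G) (i j : ι) (a b : Fin 4) (hij : A.Adj i j := by decide)
    (hab : (pauliOfLabel a, pauliOfLabel b) ∈ genSet k := by simp [genSet, pauliOfLabel]) :
    StringMem (dla k G) c.toEmbedding (pairLabels i j a b) :=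
  stringMem_pairLabels_iff.2 <|
    LieSubalgebra.subset_lieSpan ⟨c i, c j, c.toHom.map_adj hij, _, hab, rfl⟩

end Embedded

section Dla

variable {n : ℕ} {G H : SimpleGraph (Fin n)} {k : ℕ}

theorem dla_mono (h : G ≤ H) : dla k G ≤ dla k H :=
  LieSubalgebra.lieSpan_mono fun _ ⟨i, j, hij, p, hp, hM⟩ => ⟨i, j, h hij, p, hp, hM⟩

theorem dla_le_dla_of_genSet_subset {k' : ℕ} (h : genSet k ⊆ genSet k') :
    dla k G ≤ dla k' G :=
  LieSubalgebra.lieSpan_mono fun _ ⟨i, j, hij, p, hp, hM⟩ => ⟨i, j, hij, p, h hp, hM⟩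

theorem dla_le_of_forall_adj
    (h : ∀ i j, H.Adj i j → ∀ p ∈ genSet k, Complex.I • twoLocal p.1 p.2 i j ∈ dla k G) :
    dla k H ≤ dla k G :=
  LieSubalgebra.lieSpan_le.2 fun _ ⟨i, j, hij, p, hp, hM⟩ => hM ▸ h i j hij p hp

end Dla

def squareWithPendant : SimpleGraph (Fin 5) :=
  SimpleGraph.fromRel fun i j => (i, j) ∈ [(0, 2), (0, 3), (1, 2), (1, 3), (0, 4)]

instance : DecidableRel squareWithPendant.Adj :=
  fun _ _ => inferInstanceAs (Decidable (_ ∧ _))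

instance {n : ℕ} : DecidableRel (SimpleGraph.pathGraph n).Adj :=
  fun _ _ => decidable_of_iff _ SimpleGraph.pathGraph_adj.symm

def squareWithPendant.pathCopy : (SimpleGraph.pathGraph 4).Copy squareWithPendant :=
  ⟨⟨![1, 2, 0, 4], fun {a b} h => by
    revert a b
    decide⟩, by decide⟩

section Derivations

variable {n : ℕ} {G : SimpleGraph (Fin n)}

theorem twoLocal_mem_dla_two_of_copy (c : squareWithPendant.Copy G) {p} (hp : p ∈ genSet 2) :
    Complex.I • twoLocal p.1 p.2 (c 1) (c 4) ∈ dla 2 G := by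
  let S := StringMem (dla 2 G) c.toEmbedding
  have hXYIZI : S ![1, 2, 0, 3, 0] := .commutator (.generator c 3 0 2 1) (.generator c 1 3 2 1)
  have hZYXZI : S ![3, 2, 1, 3, 0] := .commutator (.generator c 0 2 2 1) hXYIZI
  have hZIIXY : S ![3, 0, 0, 1, 2] := .commutator (.generator c 0 3 2 1) (.generator c 4 0 2 1)
  have hIZXYI : S ![0, 3, 1, 2, 0] := .commutator (.generator c 1 2 2 1) (.generator c 3 1 2 1)
  have hZZXZY : S ![3, 3, 1, 3, 2] := .commutator hZIIXY hIZXYI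
  have hIXIIY : S (pairLabels 1 4 1 2) := .commutator hZYXZI hZZXZY
  have hYXIZI : S ![2, 1, 0, 3, 0] := .commutator (.generator c 0 3 2 1) (.generator c 3 1 2 1)
  have hZXYZI : S ![3, 1, 2, 3, 0] := .commutator (.generator c 2 0 2 1) hYXIZI
  have hZIIYX : S ![3, 0, 0, 2, 1] := .commutator (.generator c 3 0 2 1) (.generator c 0 4 2 1)
  have hIZYXI : S ![0, 3, 2, 1, 0] := .commutator (.generator c 2 1 2 1) (.generator c 1 3 2 1)
  have hZZYZX : S ![3, 3, 2, 3, 1] := .commutator hZIIYX hIZYXI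
  have hIYIIX : S (pairLabels 1 4 2 1) := .commutator hZXYZI hZZYZX
  simp only [genSet, Set.mem_insert_iff, Set.mem_singleton_iff] at hp
  rcases hp with rfl | rfl
  · simpa [pauliOfLabel] using stringMem_pairLabels_iff.1 hIXIIY
  · simpa [pauliOfLabel] using stringMem_pairLabels_iff.1 hIYIIX

theorem twoLocal_mem_dla_four_of_copy (c : squareWithPendant.Copy G) {p} (hp : p ∈ genSet 4) :
    Complex.I • twoLocal p.1 p.2 (c 1) (c 4) ∈ dla 4 G := by
  let S := StringMem (dla 4 G) c.toEmbedding
  have hXYIZI : S ![1, 2, 0, 3, 0] := .commutator (.generator c 3 0 1 1) (.generator c 3 1 2 2)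
  have hZYYZI : S ![3, 2, 2, 3, 0] := .commutator (.generator c 2 0 2 2) hXYIZI
  have hZIIYX : S ![3, 0, 0, 2, 1] := .commutator (.generator c 3 0 2 2) (.generator c 4 0 1 1)
  have hIZYXI : S ![0, 3, 2, 1, 0] := .commutator (.generator c 2 1 2 2) (.generator c 3 1 1 1)
  have hZZYZX : S ![3, 3, 2, 3, 1] := .commutator hZIIYX hIZYXI
  have hIXIIX : S (pairLabels 1 4 1 1) := .commutator hZYYZI hZZYZX
  have hYXIZI : S ![2, 1, 0, 3, 0] := .commutator (.generator c 3 0 2 2) (.generator c 3 1 1 1)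
  have hZXXZI : S ![3, 1, 1, 3, 0] := .commutator (.generator c 2 0 1 1) hYXIZI
  have hZIIXY : S ![3, 0, 0, 1, 2] := .commutator (.generator c 3 0 1 1) (.generator c 4 0 2 2)
  have hIZXYI : S ![0, 3, 1, 2, 0] := .commutator (.generator c 2 1 1 1) (.generator c 3 1 2 2)
  have hZZXZY : S ![3, 3, 1, 3, 2] := .commutator hZIIXY hIZXYI
  have hIYIIY : S (pairLabels 1 4 2 2) := .commutator hZXXZI hZZXZY
  simp only [genSet, Set.mem_insert_iff, Set.mem_singleton_iff] at hp
  rcases hp with rfl | rfl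
  · simpa [pauliOfLabel] using stringMem_pairLabels_iff.1 hIXIIX
  · simpa [pauliOfLabel] using stringMem_pairLabels_iff.1 hIYIIY

theorem twoLocal_mem_dla_six_of_copy (c : (SimpleGraph.pathGraph 4).Copy G) {p}
    (hp : p ∈ genSet 6) : Complex.I • twoLocal p.1 p.2 (c 0) (c 3) ∈ dla 6 G := by
  let S := StringMem (dla 6 G) c.toEmbedding
  have hZXYI : S ![3, 1, 2, 0] := .commutator (.generator c 0 1 3 2) (.generator c 1 2 3 2)
  have hIYYX : S ![0, 2, 2, 1] := .commutator (.generator c 2 1 3 2) (.generator c 3 2 1 1)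
  have hZZIX : S ![3, 3, 0, 1] := .commutator hZXYI hIYYX
  have hXIIX : S (pairLabels 0 3 1 1) := .commutator (.generator c 1 0 3 2) hZZIX
  have hZZXI : S ![3, 3, 1, 0] := .commutator (.generator c 0 1 3 2) (.generator c 2 1 1 1)
  have hIYXZ : S ![0, 2, 1, 3] := .commutator (.generator c 2 1 3 2) (.generator c 3 2 3 2)
  have hZXIZ : S ![3, 1, 0, 3] := .commutator hZZXI hIYXZ
  have hYIIZ : S (pairLabels 0 3 2 3) := .commutator (.generator c 1 0 1 1) hZXIZ
  have hYYXI : S ![2, 2, 1, 0] := .commutator (.generator c 1 0 3 2) (.generator c 2 1 1 1)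
  have hIZXY : S ![0, 3, 1, 2] := .commutator (.generator c 1 2 3 2) (.generator c 2 3 3 2)
  have hYXIY : S ![2, 1, 0, 2] := .commutator hYYXI hIZXY
  have hZIIY : S (pairLabels 0 3 3 2) := .commutator (.generator c 1 0 1 1) hYXIY
  simp only [genSet, Set.mem_insert_iff, Set.mem_singleton_iff] at hp
  rcases hp with rfl | rfl | rfl
  · simpa [pauliOfLabel] using stringMem_pairLabels_iff.1 hXIIX
  · simpa [pauliOfLabel] using stringMem_pairLabels_iff.1 hYIIZ
  · simpa [pauliOfLabel] using stringMem_pairLabels_iff.1 hZIIY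

theorem genSet_fourteen : genSet 14 = genSet 4 ∪ genSet 2 := by
  ext p
  simp only [genSet, Set.mem_union, Set.mem_insert_iff, Set.mem_singleton_iff]
  tauto

theorem twoLocal_mem_dla_of_copy {k : ℕ} (hk : k ∈ ({2, 4, 6, 14} : Set ℕ))
    (c : squareWithPendant.Copy G) {p} (hp : p ∈ genSet k) :
    Complex.I • twoLocal p.1 p.2 (c 1) (c 4) ∈ dla k G := by
  rcases hk with rfl | rfl | rfl | rfl
  · exact twoLocal_mem_dla_two_of_copy c hp
  · exact twoLocal_mem_dla_four_of_copy c hp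
  · exact twoLocal_mem_dla_six_of_copy (c.comp squareWithPendant.pathCopy) hp
  · rw [genSet_fourteen] at hp
    rcases hp with hp | hp
    · exact dla_le_dla_of_genSet_subset (genSet_fourteen ▸ Set.subset_union_left)
        (twoLocal_mem_dla_four_of_copy c hp)
    · exact dla_le_dla_of_genSet_subset (genSet_fourteen ▸ Set.subset_union_right)
        (twoLocal_mem_dla_two_of_copy c hp)

end Derivations

theorem swap_mem_genSet {k : ℕ} (hk : k ∈ ({2, 4, 6, 14} : Set ℕ))
    {p : Matrix (Fin 2) (Fin 2) ℂ × Matrix (Fin 2) (Fin 2) ℂ} (hp : p ∈ genSet k) :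
    (p.2, p.1) ∈ genSet k := by
  rcases hk with rfl | rfl | rfl | rfl <;>
    simp only [genSet, Set.mem_insert_iff, Set.mem_singleton_iff] at hp ⊢ <;>
    rcases hp with rfl | rfl | rfl | rfl <;> simp

theorem twoLocal_swap {n : ℕ} (A B : Matrix (Fin 2) (Fin 2) ℂ) {i j : Fin n} (h : i ≠ j) :
    twoLocal A B i j = twoLocal B A j i := by
  refine congrArg pauliString (funext fun k => ?_)
  by_cases hi : k = i
  · simp [hi, h]
  · simp [hi]

section Bipartite

variable {l m : ℕ}

theorem KbipPlusPendant_le_KbipExtended (hl : 0 < l) :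
    KbipPlusPendant l m ≤ KbipExtended l m := by
  intro u v huv
  simp only [KbipPlusPendant, KbipExtended, SimpleGraph.fromRel_adj] at huv ⊢
  omega

def KbipPlusPendant.squareCopy (hm : 1 < m) (w : Fin (l + m + 1)) (hw0 : 0 < (w : ℕ))
    (hwl : (w : ℕ) < l) : squareWithPendant.Copy (KbipPlusPendant l m) :=
  ⟨⟨![0, w, ⟨l, by omega⟩, ⟨l + 1, by omega⟩, Fin.last _], fun {a b} h => by
    fin_cases a <;> fin_cases b <;> revert h <;>
      simp [squareWithPendant, KbipPlusPendant, Fin.ext_iff, -Fin.val_eq_zero_iff] <;> omega⟩, by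
    intro a b h
    fin_cases a <;> fin_cases b <;>
      simp [Fin.ext_iff, Fin.val_last, -Fin.val_eq_zero_iff] at h ⊢ <;> omega⟩

theorem exists_squareWithPendant_copy (hm : 1 < m) {u v : Fin (l + m + 1)}
    (hext : (KbipExtended l m).Adj u v) (hpend : ¬(KbipPlusPendant l m).Adj u v) :
    ∃ c : squareWithPendant.Copy (KbipPlusPendant l m),
      c 1 = u ∧ c 4 = v ∨ c 1 = v ∧ c 4 = u := by
  simp only [KbipPlusPendant, KbipExtended, SimpleGraph.fromRel_adj] at hext hpend
  have hu := u.isLt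
  have hv := v.isLt
  have hmissing : (0 < (u : ℕ) ∧ (u : ℕ) < l ∧ (v : ℕ) = l + m) ∨
      (0 < (v : ℕ) ∧ (v : ℕ) < l ∧ (u : ℕ) = l + m) := by
    omega
  rcases hmissing with ⟨hu0, hul, hvl⟩ | ⟨hv0, hvl, hul⟩
  · exact ⟨KbipPlusPendant.squareCopy hm u hu0 hul, .inl ⟨rfl, Fin.ext hvl.symm⟩⟩
  · exact ⟨KbipPlusPendant.squareCopy hm v hv0 hvl, .inr ⟨rfl, Fin.ext hul.symm⟩⟩

end Bipartite

/-- For `l, m > 1` and `k ∈ {2, 4, 6, 14}`, the graph `K_{l,m}` plus a pendant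
vertex attached to vertex `1` is `k`-equivalent to `K_{l,m+1}`. -/
theorem dla_KbipPlusPendant_eq_KbipExtended (l m : ℕ) (hl : 1 < l) (hm : 1 < m)
    (k : ℕ) (hk : k ∈ ({2, 4, 6, 14} : Set ℕ)) :
    dla k (KbipPlusPendant l m) = dla k (KbipExtended l m) := by
  refine le_antisymm (dla_mono (KbipPlusPendant_le_KbipExtended (by omega)))
    (dla_le_of_forall_adj fun u v huv p hp => ?_)
  by_cases hpend : (KbipPlusPendant l m).Adj u v
  · exact LieSubalgebra.subset_lieSpan ⟨u, v, hpend, p, hp, rfl⟩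
  obtain ⟨c, ⟨rfl, rfl⟩ | ⟨rfl, rfl⟩⟩ := exists_squareWithPendant_copy hm huv hpend
  · exact twoLocal_mem_dla_of_copy hk c hp
  · have hswap := twoLocal_mem_dla_of_copy hk c (swap_mem_genSet hk hp)
    rwa [twoLocal_swap _ _ huv.ne]
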